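/- arXiv:0711.1371 — 2 statements merged into one kernel-verified Lean document; each statement's English description precedes it below -/
import Mathlib

section
/- Let 0 < ε < 2, λ ∈ ℂ, and let v ∈ l²({1,2,3,...}) satisfy (ε/2)·n(n-1)·v_{n-1} − (ε/2)·n(n+1)·v_{n+1} + n·v_n = λ·v_n for all n ≥ 1 (with v_0 := 0). Define the generating function u(z) := Σ_{k=1}^∞ v_k z^k for |z| < 1. Then u is analytic on the open unit disc and satisfies z(1−z)(1+z)·u''(z) − 2z(z + 1/ε)·u'(z) + (2λ/ε)·u(z) = 0 for all |z| < 1. -/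
/-!
An `ℓ²` sequence is bounded, so its generating function and the termwise derivatives converge on
the unit disc and may be differentiated term by term. Multiplication by `z` shifts coefficients,
so the coefficient of `z ^ n` in the left-hand side of the equation is `-(2 / ε)` times the
`n`-th eigenvalue equation, and for `n = 0` it vanishes because `v 0 = 0`.
-/

open Metric Set

theorem summable_succ_pow_mul_geometric (d : ℕ) {r : ℝ} (hr : ‖r‖ < 1) :
    Summable fun k : ℕ => ((k : ℝ) + 1) ^ d * r ^ k := by
  simp_rw [add_pow, one_pow, mul_one, Finset.sum_mul]
  exact summable_sum fun i _ =>
    ((summable_pow_mul_geometric_of_norm_lt_one (R := ℝ) i hr).mul_left (d.choose i : ℝ)).congr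
      fun k => by ring

theorem HasSum.mul_shift {R : Type*} [CommRing R] [TopologicalSpace R] [IsTopologicalRing R]
    {c c' : ℕ → R} {z s : R} (h : HasSum (fun n : ℕ => c n * z ^ n) s) (h0 : c' 0 = 0)
    (hc : ∀ n, c' (n + 1) = c n) : HasSum (fun n : ℕ => c' n * z ^ n) (z * s) := by
  refine (hasSum_nat_add_iff' 1).mp ?_
  simpa [h0, hc, pow_succ, mul_comm, mul_left_comm] using h.mul_left z

section PowerSeries

variable {𝕜 : Type*} [RCLike 𝕜] {a : ℕ → 𝕜} {C : ℝ} {d : ℕ}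

def derivCoeff (a : ℕ → 𝕜) (k : ℕ) : 𝕜 := (k + 1) * a (k + 1)

theorem norm_derivCoeff_le (ha : ∀ k, ‖a k‖ ≤ C * ((k : ℝ) + 1) ^ d) (k : ℕ) :
    ‖derivCoeff a k‖ ≤ 2 ^ d * C * ((k : ℝ) + 1) ^ (d + 1) := by
  have hC : 0 ≤ C := by simpa using (norm_nonneg _).trans (ha 0)
  have hk : (k : ℝ) + 1 + 1 ≤ 2 * ((k : ℝ) + 1) := by linarith [k.cast_nonneg (α := ℝ)]
  calc ‖derivCoeff a k‖ = ((k : ℝ) + 1) * ‖a (k + 1)‖ := by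
        rw [derivCoeff, norm_mul, ← Nat.cast_add_one, RCLike.norm_natCast, Nat.cast_add_one]
    _ ≤ ((k : ℝ) + 1) * (C * ((k : ℝ) + 1 + 1) ^ d) := by
        gcongr; exact_mod_cast ha (k + 1)
    _ ≤ ((k : ℝ) + 1) * (C * (2 * ((k : ℝ) + 1)) ^ d) := by gcongr
    _ = 2 ^ d * C * ((k : ℝ) + 1) ^ (d + 1) := by rw [mul_pow]; ring

theorem summable_mul_pow_of_norm_le (ha : ∀ k, ‖a k‖ ≤ C * ((k : ℝ) + 1) ^ d) {z : 𝕜}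
    (hz : ‖z‖ < 1) : Summable fun k => a k * z ^ k := by
  refine .of_norm_bounded
    ((summable_succ_pow_mul_geometric d (r := ‖z‖) (by simpa using hz)).mul_left C) fun k => ?_
  rw [norm_mul, norm_pow, ← mul_assoc]
  gcongr
  exact ha k

theorem hasDerivAt_tsum_mul_pow (ha : ∀ k, ‖a k‖ ≤ C * ((k : ℝ) + 1) ^ d) {z : 𝕜}
    (hz : ‖z‖ < 1) :
    HasDerivAt (fun w => ∑' k, a k * w ^ k) (∑' k, derivCoeff a k * z ^ k) z := by
  have hC : 0 ≤ C := by simpa using (norm_nonneg _).trans (ha 0)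
  obtain ⟨r, hzr, hr1⟩ := exists_between hz
  have hr0 : 0 < r := (norm_nonneg z).trans_lt hzr
  have hz' : z ∈ ball 0 r := mem_ball_zero_iff.mpr hzr
  -- the `1 / r` absorbs the shift between `n * y ^ (n - 1)` and `(n + 1) ^ (d + 1) * r ^ n`
  have hbound : ∀ n (y : 𝕜), y ∈ ball 0 r →
      ‖a n * (n * y ^ (n - 1))‖ ≤ C / r * (((n : ℝ) + 1) ^ (d + 1) * r ^ n) := by
    rintro (_ | m) y hy
    · simp only [CharP.cast_eq_zero, zero_mul, mul_zero, norm_zero]; positivity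
    · have hy : ‖y‖ ≤ r := (mem_ball_zero_iff.mp hy).le
      calc ‖a (m + 1) * ((m + 1 : ℕ) * y ^ (m + 1 - 1))‖
          = ‖a (m + 1)‖ * (((m : ℝ) + 1) * ‖y‖ ^ m) := by
            rw [Nat.add_sub_cancel, norm_mul, norm_mul, norm_pow, RCLike.norm_natCast,
              Nat.cast_add_one]
        _ ≤ C * ((m : ℝ) + 1 + 1) ^ d * (((m : ℝ) + 1 + 1) * r ^ m) := by
            gcongr
            · exact_mod_cast ha (m + 1)
            · linarith
        _ = C / r * ((((m + 1 : ℕ) : ℝ) + 1) ^ (d + 1) * r ^ (m + 1)) := by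
            field_simp; push_cast; ring
  have hsummable := (summable_succ_pow_mul_geometric (d + 1) (r := r)
    (by rwa [Real.norm_of_nonneg hr0.le])).mul_left (C / r)
  have hderiv := hasDerivAt_tsum_of_isPreconnected hsummable isOpen_ball
    (convex_ball 0 r).isPreconnected (fun n y _ => (hasDerivAt_pow n y).const_mul (a n))
    hbound (mem_ball_self hr0) (summable_mul_pow_of_norm_le ha (by simp)) hz'
  rw [(Summable.of_norm_bounded hsummable fun n => hbound n z hz').tsum_eq_zero_add,
    Nat.cast_zero, zero_mul, mul_zero, zero_add] at hderiv
  have hcoeff : ∀ k : ℕ, a (k + 1) * ((k + 1 : ℕ) * z ^ (k + 1 - 1)) = derivCoeff a k * z ^ k :=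
    fun k => by rw [derivCoeff, Nat.add_sub_cancel, Nat.cast_add_one]; ring
  rwa [tsum_congr hcoeff] at hderiv

theorem hasDerivAt_of_eqOn_tsum_mul_pow (ha : ∀ k, ‖a k‖ ≤ C * ((k : ℝ) + 1) ^ d) {u : 𝕜 → 𝕜}
    (hu : EqOn u (fun w => ∑' k, a k * w ^ k) (ball 0 1)) {z : 𝕜} (hz : z ∈ ball 0 1) :
    HasDerivAt u (∑' k, derivCoeff a k * z ^ k) z :=
  (hasDerivAt_tsum_mul_pow ha (mem_ball_zero_iff.mp hz)).congr_of_eventuallyEq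
    (hu.eventuallyEq_of_mem (isOpen_ball.mem_nhds hz))

theorem eqOn_deriv_tsum_mul_pow (ha : ∀ k, ‖a k‖ ≤ C * ((k : ℝ) + 1) ^ d) {u : 𝕜 → 𝕜}
    (hu : EqOn u (fun w => ∑' k, a k * w ^ k) (ball 0 1)) :
    EqOn (deriv u) (fun w => ∑' k, derivCoeff a k * w ^ k) (ball 0 1) :=
  fun _ hz => (hasDerivAt_of_eqOn_tsum_mul_pow ha hu hz).deriv

theorem hasSum_of_eqOn_tsum_mul_pow (ha : ∀ k, ‖a k‖ ≤ C * ((k : ℝ) + 1) ^ d) {u : 𝕜 → 𝕜}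
    (hu : EqOn u (fun w => ∑' k, a k * w ^ k) (ball 0 1)) {z : 𝕜} (hz : z ∈ ball 0 1) :
    HasSum (fun k => a k * z ^ k) (u z) := by
  rw [hu hz]
  exact (summable_mul_pow_of_norm_le ha (mem_ball_zero_iff.mp hz)).hasSum

end PowerSeries

theorem ode_of_recurrence_of_hasSum {𝕜 : Type*} [RCLike 𝕜] {ε lam z u u' u'' : 𝕜}
    {v : ℕ → 𝕜} (hε : ε ≠ 0) (hv0 : v 0 = 0)
    (heig : ∀ n : ℕ, 1 ≤ n →
      ε / 2 * n * (n - 1) * v (n - 1) - ε / 2 * n * (n + 1) * v (n + 1) + n * v n = lam * v n)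
    (hu : HasSum (fun k => v k * z ^ k) u) (hu' : HasSum (fun k => derivCoeff v k * z ^ k) u')
    (hu'' : HasSum (fun k => derivCoeff (derivCoeff v) k * z ^ k) u'') :
    z * (1 - z) * (1 + z) * u'' - 2 * z * (z + 1 / ε) * u' + (2 * lam / ε) * u = 0 := by
  have hzu' : HasSum (fun n : ℕ => (n : 𝕜) * v n * z ^ n) (z * u') :=
    hu'.mul_shift (by simp) fun n => by simp [derivCoeff]
  have hz2u' : HasSum (fun n : ℕ => ((n : 𝕜) - 1) * v (n - 1) * z ^ n) (z * (z * u')) :=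
    hzu'.mul_shift (by simp [hv0]) fun n => by simp
  have hzu'' : HasSum (fun n : ℕ => (n : 𝕜) * (n + 1) * v (n + 1) * z ^ n) (z * u'') :=
    hu''.mul_shift (by simp) fun n => by simp only [derivCoeff, Nat.cast_add_one]; ring
  have hz2u'' : HasSum (fun n : ℕ => ((n : 𝕜) - 1) * n * v n * z ^ n) (z * (z * u'')) :=
    hzu''.mul_shift (by simp) fun n => by simp
  have hz3u'' : HasSum (fun n : ℕ => ((n : 𝕜) - 2) * ((n : 𝕜) - 1) * v (n - 1) * z ^ n)
      (z * (z * (z * u''))) :=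
    hz2u''.mul_shift (by simp [hv0]) fun n => by
      simp only [Nat.add_sub_cancel, Nat.cast_add_one]; ring
  have hsum := ((hzu''.sub hz3u'').sub ((hz2u'.mul_left 2).add (hzu'.mul_left (2 / ε)))).add
    (hu.mul_left (2 * lam / ε))
  have hzero : HasSum (fun _ : ℕ => (0 : 𝕜)) _ := hsum.congr_fun fun n => by
    rcases n with _ | m
    · simp [hv0]
    · have hinv : ε * ε⁻¹ = 1 := mul_inv_cancel₀ hε
      have h := heig (m + 1) (by omega)
      simp only [Nat.add_sub_cancel, Nat.cast_add_one] at h ⊢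
      linear_combination (2 / ε * z ^ (m + 1)) * h
        + z ^ (m + 1) * ((m + 1) * ((m + 2) * v (m + 1 + 1) - m * v m)) * hinv
  linear_combination (hasSum_zero.unique hzero).symm

theorem generating_function_ODE_general (ε : ℝ) (hε0 : 0 < ε) (lam : ℂ) (v : ℕ → ℂ)
    (hv0 : v 0 = 0) (hl2 : Memℓp v 2)
    (heig : ∀ n : ℕ, 1 ≤ n →
      (ε : ℂ) / 2 * n * (n - 1) * v (n - 1) - (ε : ℂ) / 2 * n * (n + 1) * v (n + 1)
        + n * v n = lam * v n)
    (u : ℂ → ℂ) (hu : ∀ z : ℂ, ‖z‖ < 1 → u z = ∑' k : ℕ, v k * z ^ k) :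
    AnalyticOnNhd ℂ u (Metric.ball (0 : ℂ) 1) ∧
    ∀ z : ℂ, ‖z‖ < 1 →
      z * (1 - z) * (1 + z) * iteratedDeriv 2 u z - 2 * z * (z + 1 / (ε : ℂ)) * deriv u z
        + (2 * lam / (ε : ℂ)) * u z = 0 := by
  obtain ⟨C, hC⟩ := memℓp_infty_iff.mp (hl2.of_exponent_ge le_top)
  have hv : ∀ k, ‖v k‖ ≤ C * ((k : ℝ) + 1) ^ 0 := fun k => by simpa using hC ⟨k, rfl⟩
  have hv' := norm_derivCoeff_le hv
  have hu0 : EqOn u (fun w => ∑' k, v k * w ^ k) (ball 0 1) :=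
    fun z hz => hu z (mem_ball_zero_iff.mp hz)
  have hu1 := eqOn_deriv_tsum_mul_pow hv hu0
  have hu2 := eqOn_deriv_tsum_mul_pow hv' hu1
  refine ⟨DifferentiableOn.analyticOnNhd (fun z hz =>
    (hasDerivAt_of_eqOn_tsum_mul_pow hv hu0 hz).differentiableAt.differentiableWithinAt)
    isOpen_ball, fun z hz => ?_⟩
  have hz' : z ∈ ball 0 1 := mem_ball_zero_iff.mpr hz
  rw [iteratedDeriv_succ, iteratedDeriv_one]
  exact ode_of_recurrence_of_hasSum (by exact_mod_cast hε0.ne') hv0 heig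
    (hasSum_of_eqOn_tsum_mul_pow hv hu0 hz') (hasSum_of_eqOn_tsum_mul_pow hv' hu1 hz')
    (hasSum_of_eqOn_tsum_mul_pow (norm_derivCoeff_le hv') hu2 hz')

/-- The generating function `u(z) = Σ_{k≥1} vₖ zᵏ` of an eigenvector of `A₊`
is analytic on the open unit disc and satisfies
`z(1−z)(1+z)u'' − 2z(z+1/ε)u' + (2λ/ε)u = 0` there. -/
theorem generating_function_ODE (ε : ℝ) (hε0 : 0 < ε) (hε2 : ε < 2) (lam : ℂ) (v : ℕ → ℂ)
    (hv0 : v 0 = 0) (hl2 : Memℓp v 2)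
    (heig : ∀ n : ℕ, 1 ≤ n →
      (ε : ℂ) / 2 * n * (n - 1) * v (n - 1) - (ε : ℂ) / 2 * n * (n + 1) * v (n + 1)
        + n * v n = lam * v n)
    (u : ℂ → ℂ) (hu : ∀ z : ℂ, ‖z‖ < 1 → u z = ∑' k : ℕ, v k * z ^ k) :
    AnalyticOnNhd ℂ u (Metric.ball (0 : ℂ) 1) ∧
    ∀ z : ℂ, ‖z‖ < 1 →
      z * (1 - z) * (1 + z) * iteratedDeriv 2 u z - 2 * z * (z + 1 / (ε : ℂ)) * deriv u z
        + (2 * lam / (ε : ℂ)) * u z = 0 :=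
  generating_function_ODE_general ε hε0 lam v hv0 hl2 heig u hu
end

section
/- Let 0 < ε < 2, μ ∈ ℂ, and set p(x) = (1−x)^{1+1/ε}(1+x)^{1−1/ε} and w(x) = x^{−1}(1−x)^{1/ε}(1+x)^{−1/ε} for x ∈ (0, 1). Suppose u is analytic on an open set containing the real interval [0, 1], u(0) = 0, u is not identically zero on [0, 1], and −(p(x)u'(x))' = μ·w(x)·u(x) for all x ∈ (0, 1). Then μ ∈ ℝ. -/
/-!
Multiplying the equation by `conj u` shows that `G = Im (conj u · p u')` has derivative
`-(Im μ) w |u|²`, a function of constant sign since `w > 0`. The boundary values of `G` vanish,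
at `0` because `u 0 = 0` and at `1` because `p 1 = 0`, so `G` is constant, hence
`(Im μ) w |u|² = 0` on `(0, 1)`; if `Im μ ≠ 0` then `u` vanishes on `(0, 1)`, and by continuity
on `[0, 1]`.
-/

open Set Filter Complex ComplexConjugate Topology

theorem hasDerivAt_eq_zero_of_nonneg_of_eq {f f' : ℝ → ℝ} {a b x : ℝ}
    (hf : ContinuousOn f (Icc a b)) (hf' : ∀ y ∈ Ioo a b, HasDerivAt f (f' y) y)
    (hf'_nonneg : ∀ y ∈ Ioo a b, 0 ≤ f' y) (hfab : f a = f b) (hx : x ∈ Ioo a b) :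
    f' x = 0 := by
  have hmono : MonotoneOn f (Icc a b) :=
    monotoneOn_of_hasDerivWithinAt_nonneg (convex_Icc a b) hf
      (fun y hy => (hf' y (by simpa using hy)).hasDerivWithinAt)
      (fun y hy => hf'_nonneg y (by simpa using hy))
  have hab : a ≤ b := (hx.1.trans hx.2).le
  have hconst : ∀ y ∈ Icc a b, f y = f a := fun y hy =>
    le_antisymm (hfab ▸ hmono hy (right_mem_Icc.2 hab) hy.2) (hmono (left_mem_Icc.2 hab) hy hy.1)
  have hloc : f =ᶠ[𝓝 x] fun _ => f a := by
    filter_upwards [isOpen_Ioo.mem_nhds hx] with y hy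
    exact hconst y (Ioo_subset_Icc_self hy)
  exact (hf' x hx).unique ((hasDerivAt_const x (f a)).congr_of_eventuallyEq hloc)

/-- The term `conj u' · p u'` is real, so only `conj u · (p u')'` contributes. -/
theorem HasDerivAt.im_conj_mul_ofReal_mul {u u' : ℝ → ℂ} {p : ℝ → ℝ} {q : ℂ} {x : ℝ}
    (hu : HasDerivAt u (u' x) x) (hq : HasDerivAt (fun t => (p t : ℂ) * u' t) q x) :
    HasDerivAt (fun t => (conj (u t) * (p t * u' t)).im) (conj (u x) * q).im x := by
  have h : HasDerivAt (fun t => (conj (u t) * (p t * u' t)).im)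
      (conj (u' x) * (p x * u' x) + conj (u x) * q).im x :=
    imCLM.hasFDerivAt.comp_hasDerivAt x (hu.star.mul hq)
  refine h.congr_deriv ?_
  simp only [add_im, mul_im, mul_re, conj_re, conj_im, ofReal_re, ofReal_im, zero_mul, add_zero,
    sub_zero, neg_mul, add_eq_right]
  ring

section AnalyticRestriction

variable {u : ℂ → ℂ} {V : Set ℂ} {x : ℝ}

theorem AnalyticOnNhd.hasDerivAt_ofReal_comp (hu : AnalyticOnNhd ℂ u V) (hx : (x : ℂ) ∈ V) :
    HasDerivAt (fun s : ℝ => u s) (deriv u x) x :=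
  (hu _ hx).differentiableAt.hasDerivAt.comp_ofReal

theorem AnalyticOnNhd.deriv_ofReal_comp_eventuallyEq (hu : AnalyticOnNhd ℂ u V) (hV : IsOpen V)
    (hx : (x : ℂ) ∈ V) : deriv (fun s : ℝ => u s) =ᶠ[𝓝 x] fun t : ℝ => deriv u t := by
  filter_upwards [continuous_ofReal.continuousAt.preimage_mem_nhds (hV.mem_nhds hx)] with t ht
  exact (hu.hasDerivAt_ofReal_comp ht).deriv

theorem AnalyticOnNhd.differentiableAt_deriv_ofReal_comp (hu : AnalyticOnNhd ℂ u V)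
    (hV : IsOpen V) (hx : (x : ℂ) ∈ V) : DifferentiableAt ℝ (deriv fun s : ℝ => u s) x :=
  (hu.deriv.hasDerivAt_ofReal_comp hx).differentiableAt.congr_of_eventuallyEq
    (hu.deriv_ofReal_comp_eventuallyEq hV hx)

end AnalyticRestriction

theorem im_eq_zero_of_sturmLiouville {a b : ℝ} {p w : ℝ → ℝ} {mu : ℂ} {V : Set ℂ}
    {u : ℂ → ℂ}
    (hab : a < b) (hp_cont : ContinuousOn p (Icc a b))
    (hp_diff : ∀ x ∈ Ioo a b, DifferentiableAt ℝ p x) (hpb : p b = 0)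
    (hw : ∀ x ∈ Ioo a b, 0 < w x) (hV : IsOpen V) (hIcc : ofReal '' Icc a b ⊆ V)
    (hu : AnalyticOnNhd ℂ u V) (hua : u a = 0) (hune : ¬ ∀ x ∈ Icc a b, u x = 0)
    (hsl : ∀ x ∈ Ioo a b,
      -(deriv (fun t : ℝ => (p t : ℂ) * deriv (fun s : ℝ => u s) t) x)
        = mu * (w x : ℂ) * u x) :
    mu.im = 0 := by
  set U : ℝ → ℂ := fun s => u s
  have hmem : ∀ x ∈ Icc a b, (x : ℂ) ∈ V := fun x hx => hIcc ⟨x, hx, rfl⟩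
  have hU : ∀ x ∈ Icc a b, DifferentiableAt ℝ U x := fun x hx =>
    (hu.hasDerivAt_ofReal_comp (hmem x hx)).differentiableAt
  have hU' : ∀ x ∈ Icc a b, DifferentiableAt ℝ (deriv U) x := fun x hx =>
    hu.differentiableAt_deriv_ofReal_comp hV (hmem x hx)
  set G : ℝ → ℝ := fun t => (conj (U t) * (p t * deriv U t)).im
  have hG : ∀ x ∈ Ioo a b, HasDerivAt G (-(mu.im * (w x * normSq (u x)))) x := by
    intro x hx
    have hflux : HasDerivAt (fun t => (p t : ℂ) * deriv U t) (-(mu * w x * u x)) x := by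
      rw [← hsl x hx, neg_neg]
      exact ((hp_diff x hx).hasDerivAt.ofReal_comp.differentiableAt.mul
        (hU' x (Ioo_subset_Icc_self hx))).hasDerivAt
    refine ((hU x (Ioo_subset_Icc_self hx)).hasDerivAt.im_conj_mul_ofReal_mul hflux).congr_deriv ?_
    simp only [U, mul_neg, neg_im, mul_im, mul_re, conj_re, conj_im, ofReal_re, ofReal_im, mul_zero,
      sub_zero, zero_add, neg_mul, neg_add_rev, neg_neg, normSq_apply]
    ring
  have hG_cont : ContinuousOn G (Icc a b) := by
    have hUc : ContinuousOn U (Icc a b) := fun x hx => (hU x hx).continuousAt.continuousWithinAt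
    have hU'c : ContinuousOn (deriv U) (Icc a b) := fun x hx =>
      (hU' x hx).continuousAt.continuousWithinAt
    exact continuous_im.comp_continuousOn ((continuous_conj.comp_continuousOn hUc).mul
      ((continuous_ofReal.comp_continuousOn hp_cont).mul hU'c))
  have hGa : G a = 0 := by simp [G, U, hua]
  have hGb : G b = 0 := by simp [G, hpb]
  by_contra him
  have hu_Ioo : EqOn U 0 (Ioo a b) := by
    intro x hx
    have hzero := hasDerivAt_eq_zero_of_nonneg_of_eq (hG_cont.const_smul (-mu.im))
      (fun y hy => (hG y hy).const_mul (-mu.im))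
      (fun y hy => by
        have := mul_nonneg (sq_nonneg mu.im) (mul_nonneg (hw y hy).le (normSq_nonneg (u y)))
        linarith)
      (by simp [hGa, hGb]) hx
    have : normSq (u x) = 0 := by
      simpa [him, (hw x hx).ne'] using hzero
    simpa [U] using this
  apply hune
  intro x hx
  simpa [U] using hu_Ioo.of_subset_closure (fun y hy => (hU y hy).continuousAt.continuousWithinAt)
    continuousOn_const Ioo_subset_Icc_self (closure_Ioo hab.ne).ge hx

section Weight

variable {α β : ℝ}

theorem continuousOn_one_sub_rpow_mul_one_add_rpow (hα : 0 ≤ α) :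
    ContinuousOn (fun x : ℝ => (1 - x) ^ α * (1 + x) ^ β) (Ioi (-1)) := by
  refine ((continuousOn_const.sub continuousOn_id).rpow_const fun _ _ => Or.inr hα).mul
    ((continuousOn_const.add continuousOn_id).rpow_const fun x hx => Or.inl ?_)
  simp only [Pi.add_apply, id]
  linarith [mem_Ioi.1 hx]

theorem differentiableAt_one_sub_rpow_mul_one_add_rpow {x : ℝ} (hx : x ∈ Ioo (-1) 1) :
    DifferentiableAt ℝ (fun x : ℝ => (1 - x) ^ α * (1 + x) ^ β) x := by
  have h₁ : 1 - x ≠ 0 := by linarith [hx.2]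
  have h₂ : 1 + x ≠ 0 := by linarith [hx.1]
  exact ((differentiableAt_id.const_sub 1).rpow_const (Or.inl h₁)).mul
    ((differentiableAt_id.const_add 1).rpow_const (Or.inl h₂))

end Weight

theorem sturm_liouville_real_eigenvalue_general (ε : ℝ) (hε0 : 0 < ε) (mu : ℂ)
    (p w : ℝ → ℝ)
    (hp : ∀ x : ℝ, p x = (1 - x) ^ (1 + 1 / ε) * (1 + x) ^ (1 - 1 / ε))
    (hw : ∀ x : ℝ, w x = x⁻¹ * (1 - x) ^ (1 / ε) * (1 + x) ^ (-(1 / ε)))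
    (V : Set ℂ) (hV : IsOpen V) (hIcc : (Complex.ofReal '' Set.Icc (0 : ℝ) 1) ⊆ V)
    (u : ℂ → ℂ) (hu : AnalyticOnNhd ℂ u V) (hu0 : u 0 = 0)
    (hune : ¬ ∀ x ∈ Set.Icc (0 : ℝ) 1, u x = 0)
    (hsl : ∀ x ∈ Set.Ioo (0 : ℝ) 1,
      -(deriv (fun t : ℝ => (p t : ℂ) * deriv (fun s : ℝ => u s) t) x)
        = mu * (w x : ℂ) * u x) :
    mu.im = 0 := by
  obtain rfl : p = fun x => (1 - x) ^ (1 + 1 / ε) * (1 + x) ^ (1 - 1 / ε) := funext hp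
  have hα : 0 < 1 + 1 / ε := by positivity
  have hw_pos : ∀ x ∈ Ioo (0 : ℝ) 1, 0 < w x := fun x ⟨hx0, hx1⟩ => by
    have : 0 < 1 - x := by linarith
    have : 0 < 1 + x := by linarith
    rw [hw]
    positivity
  exact im_eq_zero_of_sturmLiouville zero_lt_one
    ((continuousOn_one_sub_rpow_mul_one_add_rpow hα.le).mono fun x hx =>
      show -1 < x by linarith [hx.1])
    (fun x hx => differentiableAt_one_sub_rpow_mul_one_add_rpow ⟨by linarith [hx.1], hx.2⟩)
    (by simp only [sub_self, Real.zero_rpow hα.ne', zero_mul]) hw_pos hV hIcc hu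
    (by simpa using hu0) hune hsl

/-- If `u` is analytic on an open set containing `[0,1]`, vanishes at `0`,
is not identically zero on `[0,1]`, and satisfies the Sturm–Liouville equation
`−(p u')' = μ w u` on `(0,1)` with `p(x) = (1−x)^(1+1/ε)(1+x)^(1−1/ε)` and
`w(x) = x⁻¹(1−x)^(1/ε)(1+x)^(−1/ε)`, then `μ` is real. -/
theorem sturm_liouville_real_eigenvalue (ε : ℝ) (hε0 : 0 < ε) (hε2 : ε < 2) (mu : ℂ)
    (p w : ℝ → ℝ)
    (hp : ∀ x : ℝ, p x = (1 - x) ^ (1 + 1 / ε) * (1 + x) ^ (1 - 1 / ε))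
    (hw : ∀ x : ℝ, w x = x⁻¹ * (1 - x) ^ (1 / ε) * (1 + x) ^ (-(1 / ε)))
    (V : Set ℂ) (hV : IsOpen V) (hIcc : (Complex.ofReal '' Set.Icc (0 : ℝ) 1) ⊆ V)
    (u : ℂ → ℂ) (hu : AnalyticOnNhd ℂ u V) (hu0 : u 0 = 0)
    (hune : ¬ ∀ x ∈ Set.Icc (0 : ℝ) 1, u x = 0)
    (hsl : ∀ x ∈ Set.Ioo (0 : ℝ) 1,
      -(deriv (fun t : ℝ => (p t : ℂ) * deriv (fun s : ℝ => u s) t) x)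
        = mu * (w x : ℂ) * u x) :
    mu.im = 0 :=
  sturm_liouville_real_eigenvalue_general ε hε0 mu p w hp hw V hV hIcc u hu hu0 hune hsl
end
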